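/- Let g be an analytic function on the unit disc U that extends continuously to the closed unit disc, and suppose the boundary function t ↦ g(e^{it}) is absolutely continuous on [0,2π] with derivative g_b' ∈ L^1[0,2π]. Then for every w ∈ U, i w g'(w) equals the Poisson integral of g_b' evaluated at w, i.e., i w g'(w) = (1/2π) ∫_0^{2π} ((1-|w|²)/|e^{it} - w|²) g_b'(t) dt. -/

import Mathlib

/-!
On the unit circle the Poisson kernel splits as `z / (z - w) + w̄ z / (1 - w̄ z)`, a sum of two
functions holomorphic near the circle. Integrating by parts against the absolutely continuous
boundary function `t ↦ g (e^{it})` (the boundary terms cancel by periodicity) turns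
`∫ k (e^{it}) g_b'(t) dt` into `-∮ k'(z) g(z) dz`. For the first kernel `k' = -w / (z - w)²` and
the Cauchy formula for the derivative gives `2πi w g'(w)`; for the second, `k' g` is holomorphic
on the disc and the Cauchy–Goursat theorem gives `0`.
-/

open Set MeasureTheory Filter Topology Metric Complex Real ComplexConjugate

namespace intervalIntegral

variable {𝕜 : Type*} [RCLike 𝕜]

theorem integral_primitive_mul_eq_integral_mul_integral {a b : ℝ} (hab : a ≤ b) {f h : ℝ → 𝕜}
    (hf : IntervalIntegrable f volume a b) (hh : IntervalIntegrable h volume a b) :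
    ∫ t in a..b, (∫ s in a..t, h s) * f t = ∫ s in a..b, h s * ∫ t in s..b, f t := by
  -- Both sides integrate `h s * f t` over the triangle `a < s ≤ t ≤ b`.
  set K : ℝ → ℝ → 𝕜 := fun t s => (Iic t).indicator (fun s => h s * f t) s
  have hK : Integrable (Function.uncurry K)
      ((volume.restrict (Ioc a b)).prod (volume.restrict (Ioc a b))) := by
    refine ((hf.1.mul_prod hh.1).indicator
      (measurableSet_le measurable_snd measurable_fst)).congr (ae_of_all _ fun p => ?_)
    simp only [K, Function.uncurry, indicator_apply, mem_Iic, mem_ofPred_eq]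
    split_ifs <;> simp [mul_comm]
  have inner_t : ∀ t ∈ Ioc a b, ∫ s in Ioc a b, K t s = (∫ s in a..t, h s) * f t := by
    intro t ht
    rw [setIntegral_indicator measurableSet_Iic, Ioc_inter_Iic, min_eq_right ht.2,
      ← integral_of_le ht.1.le, integral_mul_const]
  have inner_s : ∀ s ∈ Ioc a b, ∫ t in Ioc a b, K t s = h s * ∫ t in s..b, f t := by
    intro s hs
    have hK_s : ∀ t, K t s = (Ici s).indicator (fun t => h s * f t) t := fun t => by
      simp only [K, indicator_apply, mem_Iic, mem_Ici]
    have hIcc : Ioc a b ∩ Ici s = Icc s b := by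
      ext t
      simp only [mem_inter_iff, mem_Ioc, mem_Ici, mem_Icc]
      grind
    simp_rw [hK_s]
    rw [setIntegral_indicator measurableSet_Ici, hIcc, integral_Icc_eq_integral_Ioc,
      ← integral_of_le hs.2, integral_const_mul]
  rw [integral_of_le hab, integral_of_le hab, ← setIntegral_congr_fun measurableSet_Ioc inner_t,
    ← setIntegral_congr_fun measurableSet_Ioc inner_s, integral_integral_swap hK]

theorem integral_mul_eq_sub_sub_integral_deriv_mul_of_primitive {a b : ℝ} (hab : a ≤ b)
    {u u' f F : ℝ → 𝕜} (hu : ∀ t ∈ Icc a b, HasDerivAt u (u' t) t)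
    (hu' : IntervalIntegrable u' volume a b) (hf : IntervalIntegrable f volume a b)
    (hF : ∀ t ∈ Icc a b, F t = F a + ∫ s in a..t, f s) :
    ∫ t in a..b, u t * f t = u b * F b - u a * F a - ∫ t in a..b, u' t * F t := by
  rw [← uIcc_of_le hab] at hu hF
  have hu_eq : ∀ t ∈ uIcc a b, u t = u a + ∫ s in a..t, u' s := fun t ht => by
    rw [integral_eq_sub_of_hasDerivAt (fun s hs => hu s (uIcc_subset_uIcc left_mem_uIcc ht hs))
      (hu'.mono_set (uIcc_subset_uIcc left_mem_uIcc ht)), add_sub_cancel]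
  have hF_sub : ∀ s ∈ uIcc a b, ∫ t in s..b, f t = F b - F s := fun s hs => by
    rw [hF b right_mem_uIcc, hF s hs,
      ← integral_interval_sub_left hf (hf.mono_set (uIcc_subset_uIcc left_mem_uIcc hs))]
    ring
  have hFc : ContinuousOn F (uIcc a b) :=
    ((continuousOn_const (c := F a)).add
      (continuousOn_primitive_interval' hf left_mem_uIcc)).congr hF
  calc ∫ t in a..b, u t * f t
      = ∫ t in a..b, (u a * f t + (∫ s in a..t, u' s) * f t) :=
        integral_congr fun t ht => by rw [hu_eq t ht]; ring
    _ = u a * (F b - F a) + ∫ s in a..b, u' s * (F b - F s) := by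
        rw [integral_add (hf.const_mul _) (hf.continuousOn_mul
          (continuousOn_primitive_interval' hu' left_mem_uIcc)), integral_const_mul,
          integral_primitive_mul_eq_integral_mul_integral hab hf hu', hF_sub a left_mem_uIcc,
          integral_congr fun s hs => by rw [hF_sub s hs]]
    _ = u a * (F b - F a) + ((u b - u a) * F b - ∫ s in a..b, u' s * F s) := by
        simp only [mul_sub]
        rw [integral_sub (hu'.mul_const _) (hu'.mul_continuousOn hFc), integral_mul_const,
          integral_eq_sub_of_hasDerivAt hu hu']
    _ = u b * F b - u a * F a - ∫ t in a..b, u' t * F t := by ring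

end intervalIntegral

theorem integral_comp_circleMap_mul_eq_neg_circleIntegral {c : ℂ} {R : ℝ} {u u' g : ℂ → ℂ}
    {f : ℝ → ℂ} (hu : ∀ z ∈ sphere c |R|, HasDerivAt u (u' z) z)
    (hu' : ContinuousOn u' (sphere c |R|)) (hf : IntervalIntegrable f volume 0 (2 * π))
    (hgf : ∀ t ∈ Icc 0 (2 * π), g (circleMap c R t) = g (circleMap c R 0) + ∫ s in 0..t, f s) :
    ∫ t in 0..2 * π, u (circleMap c R t) * f t = -∮ z in C(c, R), u' z * g z := by
  have hU : ∀ t ∈ Icc 0 (2 * π), HasDerivAt (fun t => u (circleMap c R t))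
      (u' (circleMap c R t) * (circleMap 0 R t * I)) t := fun t _ =>
    (hu _ (circleMap_mem_sphere' c R t)).comp t (hasDerivAt_circleMap c R t)
  have hU' : Continuous fun t => u' (circleMap c R t) * (circleMap 0 R t * I) :=
    (hu'.comp_continuous (continuous_circleMap c R) (circleMap_mem_sphere' c R)).mul
      ((continuous_circleMap 0 R).mul continuous_const)
  have hperiod : circleMap c R (2 * π) = circleMap c R 0 := by
    simpa using periodic_circleMap c R 0
  rw [intervalIntegral.integral_mul_eq_sub_sub_integral_deriv_mul_of_primitive two_pi_pos.le
    hU (hU'.intervalIntegrable _ _) hf (F := fun t => g (circleMap c R t)) hgf, hperiod,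
    sub_self, zero_sub, circleIntegral]
  congr 1
  refine intervalIntegral.integral_congr fun t _ => ?_
  simp only [deriv_circleMap, smul_eq_mul]
  ring

theorem DiffContOnCl.circleIntegral_sub_sq_inv_smul {E : Type*} [NormedAddCommGroup E]
    [NormedSpace ℂ E] [CompleteSpace E] {R : ℝ} {c w : ℂ} {f : ℂ → E}
    (hf : DiffContOnCl ℂ f (ball c R)) (hw : w ∈ ball c R) :
    ∮ z in C(c, R), ((z - w) ^ 2)⁻¹ • f z = (2 * π * I : ℂ) • deriv f w := by
  have hR : 0 < R := pos_of_mem_ball hw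
  -- The singularity of `dslope f w` at `w` is removable, so the Cauchy formula applies to it.
  have hslope : DiffContOnCl ℂ (dslope f w) (ball c R) := by
    refine ⟨(differentiableOn_dslope (isOpen_ball.mem_nhds hw)).2 hf.differentiableOn, ?_⟩
    rw [closure_ball c hR.ne']
    exact (continuousOn_dslope (closedBall_mem_nhds_of_mem hw)).2
      ⟨closure_ball c hR.ne' ▸ hf.continuousOn, hf.differentiableAt isOpen_ball hw⟩
  have hsphere : ∀ z ∈ sphere c R, z ≠ w := fun z hz => sphere_disjoint_ball.ne_of_mem hz hw
  have hker : ContinuousOn (fun z : ℂ => ((z - w) ^ 2)⁻¹) (sphere c R) :=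
    ((continuous_id.sub continuous_const).pow 2).continuousOn.inv₀ fun z hz =>
      pow_ne_zero 2 (sub_ne_zero.2 (hsphere z hz))
  have hker_zero : ∮ z in C(c, R), ((z - w) ^ 2)⁻¹ = 0 := by
    simpa using circleIntegral.integral_sub_zpow_of_ne (by decide : (-2 : ℤ) ≠ -1) c w R
  calc ∮ z in C(c, R), ((z - w) ^ 2)⁻¹ • f z
      = ∮ z in C(c, R), ((z - w) ^ 2)⁻¹ • (f z - f w) := by
        simp only [smul_sub]
        rw [circleIntegral.integral_sub, circleIntegral.integral_smul_const, hker_zero, zero_smul,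
          sub_zero]
        · exact (hker.smul (hf.continuousOn.mono (sphere_subset_closedBall.trans
            (closure_ball c hR.ne').symm.subset))).circleIntegrable hR.le
        · exact (hker.smul continuousOn_const).circleIntegrable hR.le
    _ = ∮ z in C(c, R), (z - w)⁻¹ • dslope f w z :=
        circleIntegral.integral_congr hR.le fun z hz => by
          simp only [dslope_of_ne f (hsphere z hz), slope, ← smul_assoc, sq, mul_inv,
            vsub_eq_sub, smul_eq_mul]
    _ = (2 * π * I : ℂ) • deriv f w := by
        rw [hslope.circleIntegral_sub_inv_smul hw, dslope_same]

theorem ofReal_poissonKernel_eq {z w : ℂ} (hz : ‖z‖ = 1) (hzw : z ≠ w) :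
    (((1 - ‖w‖ ^ 2) / ‖z - w‖ ^ 2 : ℝ) : ℂ) = z / (z - w) + conj w * z / (1 - conj w * z) := by
  have hd : z - w ≠ 0 := sub_ne_zero.2 hzw
  have hzz : z * conj z = 1 := by rw [mul_conj', hz]; simp
  have hden : 1 - conj w * z = z * conj (z - w) := by
    rw [map_sub, mul_sub, hzz]; ring
  have hd' : conj (z - w) ≠ 0 := (map_ne_zero _).2 hd
  have hz0 : z ≠ 0 := by rintro rfl; simp at hz
  push_cast
  rw [hden, ← mul_conj' (z - w), ← mul_conj' w]
  field_simp
  rw [map_sub]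
  linear_combination -hzz

theorem one_sub_mul_ne_zero_of_norm_lt_one {a z : ℂ} (ha : ‖a‖ < 1) (hz : ‖z‖ ≤ 1) :
    1 - a * z ≠ 0 := by
  refine sub_ne_zero.2 fun h => ?_
  have : ‖a * z‖ < 1 := by
    rw [norm_mul]
    exact (mul_le_of_le_one_right (norm_nonneg a) hz).trans_lt ha
  simp [← h] at this

section KernelIntegrals

variable {g : ℂ → ℂ} {f : ℝ → ℂ}

theorem integral_circleMap_div_sub_mul {w : ℂ} (hg : DiffContOnCl ℂ g (ball 0 1))
    (hw : w ∈ ball (0 : ℂ) 1) (hf : IntervalIntegrable f volume 0 (2 * π))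
    (hgf : ∀ t ∈ Icc 0 (2 * π), g (circleMap 0 1 t) = g (circleMap 0 1 0) + ∫ s in 0..t, f s) :
    ∫ t in 0..2 * π, circleMap 0 1 t / (circleMap 0 1 t - w) * f t
      = 2 * π * I * w * deriv g w := by
  have hne : ∀ z ∈ sphere (0 : ℂ) |1|, z - w ≠ 0 := fun z hz =>
    sub_ne_zero.2 (sphere_disjoint_ball.ne_of_mem (by rwa [abs_one] at hz) hw)
  have hu : ∀ z ∈ sphere (0 : ℂ) |1|,
      HasDerivAt (fun z => z / (z - w)) (-w * ((z - w) ^ 2)⁻¹) z := fun z hz =>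
    ((hasDerivAt_id' z).div ((hasDerivAt_id' z).sub_const w) (hne z hz)).congr_deriv
      (by field_simp [hne z hz]; ring)
  have hu' : ContinuousOn (fun z => -w * ((z - w) ^ 2)⁻¹) (sphere 0 |1|) :=
    continuousOn_const.mul (((continuous_id.sub continuous_const).pow 2).continuousOn.inv₀
      fun z hz => pow_ne_zero 2 (hne z hz))
  have hcauchy := hg.circleIntegral_sub_sq_inv_smul hw
  simp only [smul_eq_mul] at hcauchy
  rw [integral_comp_circleMap_mul_eq_neg_circleIntegral hu hu' hf hgf]
  simp only [mul_assoc, circleIntegral.integral_const_mul, hcauchy]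
  ring

theorem integral_mul_circleMap_div_one_sub_mul {a : ℂ} (hg : DiffContOnCl ℂ g (ball 0 1))
    (ha : ‖a‖ < 1) (hf : IntervalIntegrable f volume 0 (2 * π))
    (hgf : ∀ t ∈ Icc 0 (2 * π), g (circleMap 0 1 t) = g (circleMap 0 1 0) + ∫ s in 0..t, f s) :
    ∫ t in 0..2 * π, a * circleMap 0 1 t / (1 - a * circleMap 0 1 t) * f t = 0 := by
  have hne : ∀ z ∈ closedBall (0 : ℂ) 1, 1 - a * z ≠ 0 := fun z hz =>
    one_sub_mul_ne_zero_of_norm_lt_one ha (mem_closedBall_zero_iff.1 hz)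
  have hsphere : sphere (0 : ℂ) |1| ⊆ closedBall 0 1 := by
    rw [abs_one]; exact sphere_subset_closedBall
  have hu : ∀ z ∈ sphere (0 : ℂ) |1|,
      HasDerivAt (fun z => a * z / (1 - a * z)) (a * ((1 - a * z) ^ 2)⁻¹) z := fun z hz =>
    (((hasDerivAt_id' z).const_mul a).div (((hasDerivAt_id' z).const_mul a).const_sub 1)
      (hne z (hsphere hz))).congr_deriv (by field_simp [hne z (hsphere hz)]; ring)
  have hk : DifferentiableOn ℂ (fun z => a * ((1 - a * z) ^ 2)⁻¹) (closedBall 0 1) :=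
    (differentiableOn_const _).mul ((((differentiableOn_const _).sub
      ((differentiableOn_const _).mul differentiableOn_id)).pow 2).inv
        fun z hz => pow_ne_zero 2 (hne z hz))
  rw [integral_comp_circleMap_mul_eq_neg_circleIntegral hu (hk.continuousOn.mono hsphere) hf hgf,
    neg_eq_zero]
  exact DiffContOnCl.circleIntegral_eq_zero zero_le_one
    ((hk.mono closure_ball_subset_closedBall).diffContOnCl.smul hg)

end KernelIntegrals

/-- Let `g` be analytic on the unit disc and continuous on the closed unit disc, and suppose
the boundary function `t ↦ g(e^{it})` is absolutely continuous on `[0,2π]` (i.e. it is an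
indefinite integral of some `g_b' ∈ L¹[0,2π]`).  Then for every `w ∈ U`,
`i w g'(w) = P[g_b'](w)`, the Poisson integral of `g_b'` at `w`. -/
theorem deriv_eq_poisson_integral_of_boundary_deriv
    (g : ℂ → ℂ) (hg : DifferentiableOn ℂ g (Metric.ball 0 1))
    (hgc : ContinuousOn g (Metric.closedBall 0 1))
    (gb' : ℝ → ℂ)
    (hint : IntervalIntegrable gb' MeasureTheory.volume 0 (2 * Real.pi))
    (hac : ∀ t ∈ Set.Icc (0:ℝ) (2 * Real.pi),
      g (Complex.exp (Complex.I * t)) =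
        g (Complex.exp (Complex.I * (0:ℝ))) + ∫ s in (0:ℝ)..t, gb' s)
    (w : ℂ) (hw : w ∈ Metric.ball (0:ℂ) 1) :
    Complex.I * w * deriv g w =
      (1 / (2 * Real.pi)) •
        ∫ t in (0:ℝ)..(2 * Real.pi),
          (((1 - ‖w‖ ^ 2) / ‖Complex.exp (Complex.I * t) - w‖ ^ 2 : ℝ) : ℂ) * gb' t := by
  have hw1 : ‖w‖ < 1 := mem_ball_zero_iff.1 hw
  have hgd : DiffContOnCl ℂ g (ball 0 1) := ⟨hg, by rwa [closure_ball 0 one_ne_zero]⟩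
  have hexp : ∀ t : ℝ, exp (I * t) = circleMap 0 1 t := fun t => by simp [circleMap, mul_comm]
  simp only [hexp] at hac ⊢
  have hnorm : ∀ t, ‖circleMap 0 1 t‖ = 1 := by simp
  have hne : ∀ t, circleMap 0 1 t - w ≠ 0 := fun t =>
    sub_ne_zero.2 fun h => by simp [← h] at hw1
  have hne' : ∀ t, 1 - conj w * circleMap 0 1 t ≠ 0 := fun t =>
    one_sub_mul_ne_zero_of_norm_lt_one (by simpa) (hnorm t).le
  have hA : IntervalIntegrable (fun t => circleMap 0 1 t / (circleMap 0 1 t - w) * gb' t)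
      volume 0 (2 * π) :=
    hint.continuousOn_mul (Continuous.continuousOn <| by
      have := continuous_circleMap 0 1; fun_prop (disch := exact hne))
  have hB : IntervalIntegrable
      (fun t => conj w * circleMap 0 1 t / (1 - conj w * circleMap 0 1 t) * gb' t)
      volume 0 (2 * π) :=
    hint.continuousOn_mul (Continuous.continuousOn <| by
      have := continuous_circleMap 0 1; fun_prop (disch := exact hne'))
  rw [intervalIntegral.integral_congr fun t _ => by
      rw [ofReal_poissonKernel_eq (hnorm t) (sub_ne_zero.1 (hne t)), add_mul],
    intervalIntegral.integral_add hA hB, integral_circleMap_div_sub_mul hgd hw hint hac,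
    integral_mul_circleMap_div_one_sub_mul hgd (by simpa) hint hac, add_zero, real_smul]
  push_cast
  field_simp
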